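/- For every integer n ≥ 2, the language END_n = { w ∈ {0,1}* : the n-th symbol of w from the right end exists and equals 1 } is recognized by an (n+1)-state affine finite automaton with zero error: every member of END_n is accepted with probability 1 and every non-member with probability 0. -/

import Mathlib

open Matrix

/-- A nondeterministic finite automaton with `n` states over alphabet `α`:
a transition function `δ`, an initial state, and a set of accepting states. -/
structure NFAb (α : Type) (n : ℕ) where
  δ : Fin n → α → Finset (Fin n)
  start : Fin n
  accept : Finset (Fin n)

/-- `q` is a complete nondeterministic computation path of the transition function `δ`
on the input string `x`: `q_r ∈ δ(q_{r−1}, x_r)` for all `1 ≤ r ≤ |x|`. -/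
def IsPath {α : Type} {n : ℕ} (δ : Fin n → α → Finset (Fin n))
    (x : List α) (q : Fin (x.length + 1) → Fin n) : Prop :=
  ∀ r : Fin x.length, q r.succ ∈ δ (q r.castSucc) (x.get r)

/-- The NFA accepts `x` if some computation path on `x` starting at the initial state
ends in an accepting state. -/
def NFAb.Accepts {α : Type} {n : ℕ} (M : NFAb α n) (x : List α) : Prop :=
  ∃ q : Fin (x.length + 1) → Fin n,
    q 0 = M.start ∧ IsPath M.δ x q ∧ q (Fin.last x.length) ∈ M.accept

/-- The number of accepting nondeterministic computation paths of the NFA on `x`. -/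
noncomputable def NFAb.accPathCount {α : Type} {n : ℕ} (M : NFAb α n) (x : List α) : ℕ :=
  Nat.card {q : Fin (x.length + 1) → Fin n //
    q 0 = M.start ∧ IsPath M.δ x q ∧ q (Fin.last x.length) ∈ M.accept}

/-- An affine finite automaton (AfA) with `N` states: an initial affine state (entry sum
`1`), an affine operator (each column summing to `1`) for the left end-marker `¢`, for
each input symbol, and for the right end-marker `$`, and a set of accepting states. -/
structure AfA (α : Type) (N : ℕ) where
  init : Fin N → ℝ
  init_sum : ∑ i, init i = 1
  opL : Matrix (Fin N) (Fin N) ℝ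
  op : α → Matrix (Fin N) (Fin N) ℝ
  opR : Matrix (Fin N) (Fin N) ℝ
  opL_affine : ∀ j, ∑ i, opL i j = 1
  op_affine : ∀ a j, ∑ i, op a i j = 1
  opR_affine : ∀ j, ∑ i, opR i j = 1
  accept : Finset (Fin N)

/-- The final state of the AfA on input `x`: the initial state multiplied by the
operators of `¢`, the input symbols, and `$`, in order. -/
noncomputable def AfA.final {α : Type} {N : ℕ} (M : AfA α N) (x : List α) : Fin N → ℝ :=
  M.opR *ᵥ x.foldl (fun v a => M.op a *ᵥ v) (M.opL *ᵥ M.init)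

/-- The acceptance probability of the AfA on input `x`: the sum of the absolute values
of the final-state entries at accepting states, divided by the ℓ₁-norm of the final
state. -/
noncomputable def AfA.prob {α : Type} {N : ℕ} (M : AfA α N) (x : List α) : ℝ :=
  (∑ i ∈ M.accept, |M.final x i|) / (∑ i, |M.final x i|)

/-- `END_n`: the language of binary strings whose `n`-th symbol from the right end
exists and equals `1` (`true`). -/
def ENDL (n : ℕ) : Set (List Bool) :=
  {w | n ≤ w.length ∧ w.getD (w.length - n) false = true}


/-!
The first `n` coordinates of the affine state are a shift register holding the last `n` symbols
read, most recent first; the last coordinate is a slack entry keeping the entry sum `1`, so each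
operator only has to be specified on the register coordinates and is then completed to an
affine one. The right end-marker clears every register except the one holding the `n`-th symbol
from the right, which leaves the basis vector of that register on members of `END_n` and the
basis vector of the slack on non-members. A final state concentrated on one coordinate is
accepted with probability exactly `1` or `0`.
-/

open Finset

section AffineOperator

variable {ι R : Type*} [Fintype ι]

theorem eq_of_sum_eq_of_forall_ne {M : Type*} [AddCancelCommMonoid M] [DecidableEq ι]
    {v w : ι → M} (s : ι) (hsum : ∑ i, v i = ∑ i, w i) (hoff : ∀ i ≠ s, v i = w i) :
    v = w := by
  funext i
  by_cases hi : i = s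
  · subst hi
    rw [← add_sum_erase _ _ (mem_univ i), ← add_sum_erase _ _ (mem_univ i),
      sum_congr rfl fun j hj => hoff j (ne_of_mem_erase hj)] at hsum
    exact add_right_cancel hsum
  · exact hoff i hi

theorem sum_mulVec_of_sum_col_eq_one [Semiring R] {A : Matrix ι ι R}
    (hA : ∀ j, ∑ i, A i j = 1) (v : ι → R) : ∑ i, (A *ᵥ v) i = ∑ i, v i := by
  simp only [mulVec, dotProduct]
  rw [sum_comm]
  simp [← sum_mul, hA]

def affineCompletion [Ring R] [DecidableEq ι] (s : ι) (P : Matrix ι ι R) : Matrix ι ι R :=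
  P.updateRow s fun j => 1 - ∑ i ∈ univ.erase s, P i j

variable [Ring R] [DecidableEq ι]

theorem sum_affineCompletion_apply (s : ι) (P : Matrix ι ι R) (j : ι) :
    ∑ i, affineCompletion s P i j = 1 := by
  have hoff : ∀ i ∈ univ.erase s, affineCompletion s P i j = P i j := fun i hi => by
    rw [affineCompletion, updateRow_ne (ne_of_mem_erase hi)]
  rw [← add_sum_erase _ _ (mem_univ s), sum_congr rfl hoff, affineCompletion, updateRow_self,
    sub_add_cancel]

theorem affineCompletion_mulVec_eq {s : ι} {P : Matrix ι ι R} {v w : ι → R}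
    (hsum : ∑ i, v i = ∑ i, w i) (hoff : ∀ i ≠ s, (P *ᵥ v) i = w i) :
    affineCompletion s P *ᵥ v = w := by
  refine eq_of_sum_eq_of_forall_ne s ?_ fun i hi => ?_
  · rw [sum_mulVec_of_sum_col_eq_one (sum_affineCompletion_apply s P), hsum]
  · rw [affineCompletion, updateRow_mulVec, Function.update_of_ne hi, hoff i hi]

end AffineOperator

theorem AfA.prob_of_final_eq_single {α : Type} {N : ℕ} {M : AfA α N} {x : List α} {i : Fin N}
    {c : ℝ} (hc : c ≠ 0) (h : M.final x = Pi.single i c) :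
    M.prob x = if i ∈ M.accept then 1 else 0 := by
  simp only [AfA.prob, h, Pi.single_apply, apply_ite, abs_zero, sum_ite_eq', mem_univ, if_true]
  split_ifs <;> simp [hc]

def bitFromRight (x : List Bool) (k : ℕ) : ℝ := if x.reverse.getD k false then 1 else 0

@[simp]
theorem bitFromRight_append_singleton_zero (x : List Bool) (a : Bool) :
    bitFromRight (x ++ [a]) 0 = if a then 1 else 0 := by
  simp [bitFromRight]

@[simp]
theorem bitFromRight_append_singleton_succ (x : List Bool) (a : Bool) (k : ℕ) :
    bitFromRight (x ++ [a]) (k + 1) = bitFromRight x k := by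
  simp [bitFromRight]

theorem ne_zero_of_mem_ENDL {n : ℕ} {x : List Bool} (hx : x ∈ ENDL n) : n ≠ 0 := by
  rintro rfl
  simp [ENDL] at hx

theorem mem_ENDL_iff {n : ℕ} (hn : n ≠ 0) {x : List Bool} :
    x ∈ ENDL n ↔ x.reverse.getD (n - 1) false = true := by
  by_cases hx : n ≤ x.length
  · rw [List.getD_reverse _ (by omega),
      show x.length - 1 - (n - 1) = x.length - n by omega]
    simp [ENDL, hx]
  · rw [List.getD_eq_default _ _ (by simp; omega)]
    simp [ENDL, hx]

def registerState (n : ℕ) (x : List Bool) : Fin (n + 1) → ℝ := fun i =>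
  if (i : ℕ) < n then bitFromRight x i else 1 - ∑ k ∈ range n, bitFromRight x k

theorem registerState_of_lt {n : ℕ} (x : List Bool) {i : Fin (n + 1)} (hi : (i : ℕ) < n) :
    registerState n x i = bitFromRight x i :=
  if_pos hi

theorem sum_registerState (n : ℕ) (x : List Bool) : ∑ i, registerState n x i = 1 := by
  rw [Fin.sum_univ_castSucc]
  simp [registerState, Fin.sum_univ_eq_sum_range (bitFromRight x)]

theorem registerState_nil (n : ℕ) : registerState n [] = Pi.single (Fin.last n) 1 := by
  refine eq_of_sum_eq_of_forall_ne (Fin.last n) (by simp [sum_registerState]) fun i hi => ?_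
  simp [registerState_of_lt _ (Fin.val_lt_last hi), bitFromRight, hi]

/-- Row `0` is constant `a`, which on an affine state `v` yields `a * ∑ i, v i = a`. -/
def shiftIn (n : ℕ) (a : Bool) : Matrix (Fin (n + 1)) (Fin (n + 1)) ℝ :=
  of fun i j => if (i : ℕ) = 0 then (if a then 1 else 0) else if (j : ℕ) + 1 = i then 1 else 0

theorem shiftIn_mulVec_registerState {n : ℕ} (a : Bool) (x : List Bool) {i : Fin (n + 1)}
    (hi : (i : ℕ) < n) : (shiftIn n a *ᵥ registerState n x) i = registerState n (x ++ [a]) i := by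
  rw [registerState_of_lt _ hi]
  rcases i with ⟨_ | k, hk⟩
  · simp [shiftIn, mulVec, dotProduct, sum_registerState]
  · rw [mulVec, dotProduct, sum_eq_single ⟨k, by omega⟩]
    · simp [shiftIn, registerState_of_lt x (i := ⟨k, _⟩) (show k < n by omega)]
    · intro j _ hj
      have : (j : ℕ) ≠ k := fun h => hj (Fin.ext h)
      simp [shiftIn, this]
    · simp

theorem diagonal_mulVec_registerState {n : ℕ} (x : List Bool) {i : Fin (n + 1)}
    (hi : (i : ℕ) < n) :
    ((diagonal fun i : Fin (n + 1) => if (i : ℕ) + 1 = n then (1 : ℝ) else 0) *ᵥ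
      registerState n x) i = if (i : ℕ) + 1 = n ∧ x.reverse.getD i false then 1 else 0 := by
  rw [mulVec_diagonal, registerState_of_lt _ hi, bitFromRight, ite_zero_mul_ite_zero, one_mul]

def endAfA (n : ℕ) : AfA Bool (n + 1) where
  init := Pi.single (Fin.last n) 1
  init_sum := by simp
  opL := 1
  op a := affineCompletion (Fin.last n) (shiftIn n a)
  opR := affineCompletion (Fin.last n) (diagonal fun i => if (i : ℕ) + 1 = n then 1 else 0)
  opL_affine j := by simp [one_apply]
  op_affine a := sum_affineCompletion_apply _ _
  opR_affine := sum_affineCompletion_apply _ _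
  -- not `{⟨n - 1, _⟩}`: for `n = 0` that would be the slack coordinate
  accept := univ.filter fun i => (i : ℕ) + 1 = n

theorem endAfA_op_mulVec (n : ℕ) (a : Bool) (x : List Bool) :
    (endAfA n).op a *ᵥ registerState n x = registerState n (x ++ [a]) :=
  affineCompletion_mulVec_eq (by rw [sum_registerState, sum_registerState]) fun _ hi =>
    shiftIn_mulVec_registerState a x (Fin.val_lt_last hi)

theorem endAfA_foldl (n : ℕ) (x : List Bool) :
    x.foldl (fun v a => (endAfA n).op a *ᵥ v) ((endAfA n).opL *ᵥ (endAfA n).init) =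
      registerState n x := by
  induction x using List.reverseRecOn with
  | nil => exact (one_mulVec _).trans (registerState_nil n).symm
  | append_singleton x a ih => rw [List.foldl_append, ih]; exact endAfA_op_mulVec n a x

theorem endAfA_final_of_mem {n : ℕ} {x : List Bool} (hx : x ∈ ENDL n) :
    (endAfA n).final x = Pi.single ⟨n - 1, by omega⟩ 1 := by
  have hn := ne_zero_of_mem_ENDL hx
  refine affineCompletion_mulVec_eq (by simp [endAfA_foldl, sum_registerState]) fun i hi => ?_
  have hlast := (mem_ENDL_iff hn).1 hx
  rw [endAfA_foldl, diagonal_mulVec_registerState _ (Fin.val_lt_last hi), Pi.single_apply]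
  by_cases h : (i : ℕ) + 1 = n
  · have hi' : (i : ℕ) = n - 1 := by omega
    rw [if_pos ⟨h, by rwa [hi']⟩, if_pos (Fin.ext hi')]
  · have : i ≠ ⟨n - 1, by omega⟩ := fun h' => h (by simp [h']; omega)
    simp [h, this]

theorem endAfA_final_of_not_mem {n : ℕ} {x : List Bool} (hx : x ∉ ENDL n) :
    (endAfA n).final x = Pi.single (Fin.last n) 1 := by
  refine affineCompletion_mulVec_eq (by simp [endAfA_foldl, sum_registerState]) fun i hi => ?_
  rw [endAfA_foldl, diagonal_mulVec_registerState _ (Fin.val_lt_last hi), Pi.single_apply,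
    if_neg hi, if_neg]
  rintro ⟨h, hbit⟩
  exact hx ((mem_ENDL_iff (by omega)).2 (by rwa [← h, Nat.add_sub_cancel]))

theorem endl_recognized_by_afa_zero_error_general (n : ℕ) :
    ∃ M : AfA Bool (n + 1),
      (∀ x ∈ ENDL n, M.prob x = 1) ∧ (∀ x ∉ ENDL n, M.prob x = 0) := by
  refine ⟨endAfA n, fun x hx => ?_, fun x hx => ?_⟩
  · rw [AfA.prob_of_final_eq_single one_ne_zero (endAfA_final_of_mem hx), if_pos]
    have hn := ne_zero_of_mem_ENDL hx
    simp only [endAfA, mem_filter, mem_univ, true_and]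
    omega
  · rw [AfA.prob_of_final_eq_single one_ne_zero (endAfA_final_of_not_mem hx), if_neg]
    simp [endAfA]

/-- For every `n ≥ 2`, `END_n` is recognized by an `(n+1)`-state AfA with zero error:
every member is accepted with probability `1` and every non-member with
probability `0`. -/
theorem endl_recognized_by_afa_zero_error (n : ℕ) (hn : 2 ≤ n) :
    ∃ M : AfA Bool (n + 1),
      (∀ x ∈ ENDL n, M.prob x = 1) ∧ (∀ x ∉ ENDL n, M.prob x = 0) :=
  endl_recognized_by_afa_zero_error_general n
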